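/- With respect to the formal inner product ⟨f,g⟩ = ħ^{-n} ∫ f ḡ e^{(−|y|²+φ)/ħ} with φ of degree ≥ 3, the normalized holomorphic monomials y^I/√(I! ħ^{|I|}) are orthonormal modulo ħ: ⟨y^I/√(I!ħ^{|I|}), y^J/√(J!ħ^{|J|})⟩ = δ_{IJ} + O(ħ), i.e., the inner product lies in δ_{IJ} + ħ^{1/2}ℂ[[ħ^{1/2}]]. -/

import Mathlib

open Finsupp MeasureTheory
open scoped Classical

noncomputable section

/-- Multi-indices for `n` variables. -/
abbrev MI (n : ℕ) := Fin n →₀ ℕ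

/-- `|I| = i₁ + ⋯ + iₙ`. -/
def mdeg {n : ℕ} (I : MI n) : ℕ := I.sum fun _ v => v

/-- `I! = i₁! ⋯ iₙ!`. -/
def mfact {n : ℕ} (I : MI n) : ℕ := I.prod fun _ v => v.factorial

/-- The Wick algebra `ℂ[[y, ȳ]][[ħ]]`, as coefficient functions:
`f (k, I, J)` is the coefficient of `ħ^k y^I ȳ^J`. -/
abbrev W (n : ℕ) := ℕ × MI n × MI n → ℂ

/-- The constant multi-index with all entries `k`. -/
def constMI (n k : ℕ) : MI n := Finsupp.equivFunOnFinite.symm fun _ => k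

/-- The Wick product
`f ⋆ g = exp(−ħ Σᵢ ∂_{yᵢ} ∂_{ȳ'ᵢ}) (f(y,ȳ) g(y',ȳ'))|_{y = y'}`, written out
coefficientwise (the inner sums are finite for each fixed coefficient). -/
def wick {n : ℕ} (f g : W n) : W n := fun x =>
  ∑ M ∈ Finset.Iic (constMI n x.1),
    if mdeg M ≤ x.1 then
      ∑ p ∈ Finset.HasAntidiagonal.antidiagonal (x.1 - mdeg M),
        ∑ i ∈ Finset.HasAntidiagonal.antidiagonal x.2.1,
          ∑ j ∈ Finset.HasAntidiagonal.antidiagonal x.2.2,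
            ((-1 : ℂ) ^ mdeg M / (mfact M : ℂ)) *
              ((mfact (i.1 + M) : ℂ) / (mfact i.1 : ℂ)) *
              ((mfact (j.2 + M) : ℂ) / (mfact j.2 : ℂ)) *
              f (p.1, i.1 + M, j.1) * g (p.2, i.2, j.2 + M)
    else 0

/-- Pointwise (classical, commutative) product of formal series. -/
def wmul {n : ℕ} (f g : W n) : W n := fun x =>
  ∑ p ∈ Finset.HasAntidiagonal.antidiagonal x.1, ∑ i ∈ Finset.HasAntidiagonal.antidiagonal x.2.1,
    ∑ j ∈ Finset.HasAntidiagonal.antidiagonal x.2.2,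
      f (p.1, i.1, j.1) * g (p.2, i.2, j.2)

/-- The monomial `c · ħ^k y^I ȳ^J`. -/
def wmono {n : ℕ} (c : ℂ) (k : ℕ) (I J : MI n) : W n :=
  fun x => if x = (k, I, J) then c else 0

/-- The unit `1` of the Wick algebra. -/
def wone (n : ℕ) : W n := wmono 1 0 0 0

/-- Pointwise powers `f^m`. -/
def wpow {n : ℕ} (f : W n) : ℕ → W n
  | 0 => wone n
  | m + 1 => wmul (wpow f m) f

/-- `f` has all of its monomials `ħ^k y^I ȳ^J` of degree `2k + |I| + |J| ≥ a`. -/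
def wdegGE {n : ℕ} (f : W n) (a : ℕ) : Prop :=
  ∀ x, f x ≠ 0 → a ≤ 2 * x.1 + mdeg x.2.1 + mdeg x.2.2

/-- The extended Wick algebra: `ħ`-exponents may be negative integers. -/
abbrev WE (n : ℕ) := ℤ × MI n × MI n → ℂ

/-- Embedding of the Wick algebra into its extension. -/
def embW {n : ℕ} (f : W n) : WE n := fun x =>
  if 0 ≤ x.1 then f (x.1.toNat, x.2) else 0

/-- Degree `2k + |I| + |J| ∈ ℤ` of a monomial in the extended Wick algebra. -/
def edeg {n : ℕ} (x : ℤ × MI n × MI n) : ℤ :=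
  2 * x.1 + (mdeg x.2.1 : ℤ) + (mdeg x.2.2 : ℤ)

/-- Pointwise product on the extended Wick algebra. -/
def emul {n : ℕ} (f g : WE n) : WE n := fun x =>
  ∑' k : ℤ, ∑ i ∈ Finset.HasAntidiagonal.antidiagonal x.2.1, ∑ j ∈ Finset.HasAntidiagonal.antidiagonal x.2.2,
    f (k, i.1, j.1) * g (x.1 - k, i.2, j.2)

/-- The Wick product on the extended Wick algebra. -/
def ewick {n : ℕ} (f g : WE n) : WE n := fun x =>
  ∑' q : ℤ × MI n, ∑ i ∈ Finset.HasAntidiagonal.antidiagonal x.2.1, ∑ j ∈ Finset.HasAntidiagonal.antidiagonal x.2.2,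
    ((-1 : ℂ) ^ mdeg q.2 / (mfact q.2 : ℂ)) *
      ((mfact (i.1 + q.2) : ℂ) / (mfact i.1 : ℂ)) *
      ((mfact (j.2 + q.2) : ℂ) / (mfact j.2 : ℂ)) *
      f (q.1, i.1 + q.2, j.1) * g (x.1 - q.1 - (mdeg q.2 : ℤ), i.2, j.2 + q.2)

/-- The unit of the extended Wick algebra. -/
def eone (n : ℕ) : WE n := fun x => if x = ((0 : ℤ), (0 : MI n), (0 : MI n)) then 1 else 0

/-- Wick (star) powers in the extended Wick algebra. -/
def epow {n : ℕ} (f : WE n) : ℕ → WE n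
  | 0 => eone n
  | m + 1 => ewick (epow f m) f

/-- The classical exponential `exp(H/ħ) = Σₘ (1/m!) Hᵐ/ħᵐ`, an element of the
extended Wick algebra. -/
def expOverHbar {n : ℕ} (H : W n) : WE n := fun x =>
  ∑' m : ℕ, ((m.factorial : ℂ))⁻¹ * embW (wpow H m) (x.1 + (m : ℤ), x.2)

/-- The star-exponential `exp^⋆(X) = Σₘ X^{⋆m}/m!`. -/
def starExp {n : ℕ} (X : WE n) : WE n := fun x =>
  ∑' m : ℕ, ((m.factorial : ℂ))⁻¹ * epow X m x

/-- The Fock space `ℂ[[y]][[ħ]]`: `s (k, I)` is the coefficient of `ħ^k y^I`. -/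
abbrev F (n : ℕ) := ℕ × MI n → ℂ

/-- The extended Fock space (negative powers of `ħ` allowed). -/
abbrev FE (n : ℕ) := ℤ × MI n → ℂ

/-- Embedding of the Fock space into its extension. -/
def embF {n : ℕ} (s : F n) : FE n := fun x =>
  if 0 ≤ x.1 then s (x.1.toNat, x.2) else 0

/-- The Bargmann-Fock action on the Fock space: the normally ordered monomial
`ħ^m y^I ȳ^J` acts as `(ħ ∂/∂y)^J ∘ m_{y^I}`, extended `ℂ[[ħ]]`-linearly. -/
def bf {n : ℕ} (f : W n) (s : F n) : F n := fun x =>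
  ∑ m ∈ Finset.range (x.1 + 1), ∑ J ∈ Finset.Iic (constMI n x.1),
    if m + mdeg J ≤ x.1 then
      ∑ I ∈ Finset.Iic (x.2 + J),
        f (m, I, J) * ((mfact (x.2 + J) : ℂ) / (mfact x.2 : ℂ)) *
          s (x.1 - m - mdeg J, x.2 + J - I)
    else 0

/-- The Bargmann-Fock action of extended Wick elements on the extended Fock space. -/
def ebf {n : ℕ} (E : WE n) (s : FE n) : FE n := fun x =>
  ∑' q : ℤ × MI n, ∑ I ∈ Finset.Iic (x.2 + q.2),
    E (q.1, I, q.2) * ((mfact (x.2 + q.2) : ℂ) / (mfact x.2 : ℂ)) *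
      s (x.1 - q.1 - (mdeg q.2 : ℤ), x.2 + q.2 - I)

/-- Complex conjugation on the Wick algebra: swaps `y^I ↔ ȳ^I` and conjugates
coefficients. -/
def conjW {n : ℕ} (f : W n) : W n := fun x => (starRingEnd ℂ) (f (x.1, x.2.2, x.2.1))

/-- The formal (oscillatory Gaussian) integral `ħ^{-n} ∫ h e^{(−|y|²+φ)/ħ}` as a
formal Laurent series in `ħ` (coefficient of `ħ^d`), defined by expanding
`e^{φ/ħ}` and applying the Wick contraction rule
`ħ^{-n} ∫ y^I ȳ^J e^{−|y|²/ħ} = δ_{IJ} I! ħ^{|I|}`. -/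
def FI {n : ℕ} (φ h : W n) : ℤ → ℂ := fun d =>
  ∑' q : ℕ × MI n,
    if 0 ≤ d + (q.1 : ℤ) - (mdeg q.2 : ℤ) then
      ((q.1.factorial : ℂ))⁻¹ * (mfact q.2 : ℂ) *
        wmul (wpow φ q.1) h ((d + (q.1 : ℤ) - (mdeg q.2 : ℤ)).toNat, q.2, q.2)
    else 0

/-- The formal inner product `⟨f, g⟩ = ħ^{-n} ∫ f ḡ e^{(−|y|²+φ)/ħ}`. -/
def ip {n : ℕ} (φ f g : W n) : ℤ → ℂ := FI φ (wmul f (conjW g))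


/-- `𝒲 ⊗ ℂ((√ħ))`: `f (k, I, J)` is the coefficient of `(√ħ)^k y^I ȳ^J`, `k : ℤ`. -/
abbrev WH (n : ℕ) := ℤ × MI n × MI n → ℂ

/-- Pointwise product on `𝒲 ⊗ ℂ((√ħ))`. -/
def hmul {n : ℕ} (f g : WH n) : WH n := fun x =>
  ∑' k : ℤ, ∑ i ∈ Finset.HasAntidiagonal.antidiagonal x.2.1, ∑ j ∈ Finset.HasAntidiagonal.antidiagonal x.2.2,
    f (k, i.1, j.1) * g (x.1 - k, i.2, j.2)

/-- The unit of `𝒲 ⊗ ℂ((√ħ))`. -/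
def hone (n : ℕ) : WH n := fun x => if x = ((0 : ℤ), (0 : MI n), (0 : MI n)) then 1 else 0

/-- Pointwise powers in `𝒲 ⊗ ℂ((√ħ))`. -/
def hpow {n : ℕ} (f : WH n) : ℕ → WH n
  | 0 => hone n
  | m + 1 => hmul (hpow f m) f

/-- Complex conjugation on `𝒲 ⊗ ℂ((√ħ))`: `(√ħ)^k a y^I ȳ^J ↦ (√ħ)^k ā ȳ^I y^J`. -/
def conjH {n : ℕ} (f : WH n) : WH n := fun x => (starRingEnd ℂ) (f (x.1, x.2.2, x.2.1))

/-- The formal integral `ħ^{-n} ∫ h e^{(−|y|²+φ)/ħ}` in the `√ħ` grading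
(`ħ^m` has `√ħ`-exponent `2m`), defined by expanding `e^{φ/ħ}` and applying the
Wick contraction rule `ħ^{-n} ∫ y^I ȳ^J e^{−|y|²/ħ} = δ_{IJ} I! ħ^{|I|}`. -/
def FIH {n : ℕ} (φ h : WH n) : ℤ → ℂ := fun d =>
  ∑' q : ℕ × MI n,
    ((q.1.factorial : ℂ))⁻¹ * (mfact q.2 : ℂ) *
      hmul (hpow φ q.1) h (d + 2 * (q.1 : ℤ) - 2 * (mdeg q.2 : ℤ), q.2, q.2)

/-- The formal inner product `⟨f, g⟩ = ħ^{-n} ∫ f ḡ e^{(−|y|²+φ)/ħ}` in the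
`√ħ` grading. -/
def ipH {n : ℕ} (φ f g : WH n) : ℤ → ℂ := FIH φ (hmul f (conjH g))

/-- The normalized holomorphic monomial `y^I / √(I! ħ^{|I|})`, an element of
`𝒲 ⊗ ℂ((√ħ))` with `√ħ`-exponent `−|I|`. -/
def nmonH {n : ℕ} (I : MI n) : WH n := fun x =>
  if x = (-(mdeg I : ℤ), I, (0 : MI n)) then ((Real.sqrt (mfact I) : ℝ) : ℂ)⁻¹ else 0

section Aux

variable {n : ℕ}

lemma mdeg_add (A B : MI n) : mdeg (A + B) = mdeg A + mdeg B := by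
  simpa [mdeg] using
    Finsupp.sum_add_index' (f := A) (g := B) (h := fun (_ : Fin n) v => v) (by simp) (by simp)

lemma mfact_pos (A : MI n) : 0 < mfact A :=
  Finset.prod_pos (fun i _ => Nat.factorial_pos _)

lemma tsum_ne_zero_exists {ι : Type*} (f : ι → ℂ) (h : ∑' i, f i ≠ 0) : ∃ i, f i ≠ 0 := by
  by_contra hc; push_neg at hc
  exact h (by rw [show f = fun _ => 0 from funext hc]; exact tsum_zero)

/-- A delta element of `𝒲 ⊗ ℂ((√ħ))`. -/
def hdelta (a : ℤ) (A B : MI n) (c : ℂ) : WH n := fun x => if x = (a, A, B) then c else 0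

lemma nmonH_eq (I : MI n) :
    nmonH I = hdelta (-(mdeg I : ℤ)) I 0 ((Real.sqrt (mfact I) : ℝ) : ℂ)⁻¹ := rfl

lemma hone_eq : hone n = hdelta 0 0 0 1 := rfl

lemma conjH_nmonH (J : MI n) :
    conjH (nmonH J) = hdelta (-(mdeg J : ℤ)) 0 J ((Real.sqrt (mfact J) : ℝ) : ℂ)⁻¹ := by
  funext x
  obtain ⟨a, A, B⟩ := x
  simp only [conjH, nmonH, hdelta, Prod.mk.injEq]
  by_cases h1 : a = -(mdeg J : ℤ) <;> by_cases h2 : A = 0 <;> by_cases h3 : B = J <;>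
    simp_all [Complex.conj_ofReal, map_inv₀]

lemma hmul_hdelta (a b : ℤ) (A1 A2 B1 B2 : MI n) (c c' : ℂ) :
    hmul (hdelta a A1 A2 c) (hdelta b B1 B2 c')
      = hdelta (a + b) (A1 + B1) (A2 + B2) (c * c') := by
  funext x
  obtain ⟨e, M, N⟩ := x
  simp only [hmul, hdelta]
  refine (tsum_eq_single a ?_).trans ?_
  · intro k hk
    refine Finset.sum_eq_zero fun i _ => Finset.sum_eq_zero fun j _ => ?_
    rw [if_neg fun hc => hk (Prod.ext_iff.mp hc).1, zero_mul]
  have hterm : ∀ i : MI n × MI n, ∀ j : MI n × MI n,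
      (if ((a : ℤ), i.1, j.1) = (a, A1, A2) then c else 0) *
        (if ((e - a : ℤ), i.2, j.2) = (b, B1, B2) then c' else 0)
      = if i = (A1, B1) then
          (if j = (A2, B2) then (if e = a + b then c * c' else 0) else 0) else 0 := by
    intro i j
    by_cases h1 : i = (A1, B1) <;> by_cases h2 : j = (A2, B2) <;> by_cases h3 : e = a + b <;>
      simp_all [Prod.ext_iff, sub_eq_iff_eq_add] <;> first | omega | (split_ifs <;> simp_all)
  calc (∑ i ∈ Finset.HasAntidiagonal.antidiagonal M, ∑ j ∈ Finset.HasAntidiagonal.antidiagonal N,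
          (if ((a : ℤ), i.1, j.1) = (a, A1, A2) then c else 0) *
            (if ((e - a : ℤ), i.2, j.2) = (b, B1, B2) then c' else 0))
      = ∑ i ∈ Finset.HasAntidiagonal.antidiagonal M,
          if i = (A1, B1) then
            (∑ j ∈ Finset.HasAntidiagonal.antidiagonal N,
              if j = (A2, B2) then (if e = a + b then c * c' else 0) else 0) else 0 := by
        refine Finset.sum_congr rfl fun i _ => ?_
        rw [Finset.sum_congr rfl fun j _ => hterm i j]
        split_ifs with h <;> simp
    _ = if (e, M, N) = ((a + b : ℤ), A1 + B1, A2 + B2) then c * c' else 0 := by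
        rw [Finset.sum_ite_eq' (Finset.HasAntidiagonal.antidiagonal M) (A1, B1),
          Finset.sum_ite_eq' (Finset.HasAntidiagonal.antidiagonal N) (A2, B2)]
        simp only [Finset.mem_antidiagonal, Prod.mk.injEq]
        split_ifs <;> simp_all <;> tauto

lemma hpow_deg (φ : WH n)
    (hdeg : ∀ x, φ x ≠ 0 → (3 : ℤ) ≤ x.1 + (mdeg x.2.1 : ℤ) + (mdeg x.2.2 : ℤ)) :
    ∀ (m : ℕ) (x), hpow φ m x ≠ 0 →
      (3 * m : ℤ) ≤ x.1 + (mdeg x.2.1 : ℤ) + (mdeg x.2.2 : ℤ) := by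
  intro m
  induction m with
  | zero =>
    intro x hx
    rw [show hpow φ 0 = hone n from rfl] at hx
    have hx0 : x = ((0 : ℤ), (0 : MI n), (0 : MI n)) := by
      by_contra hc; exact hx (if_neg hc)
    subst hx0
    simp [mdeg]
  | succ m ih =>
    intro x hx
    rw [show hpow φ (m + 1) = hmul (hpow φ m) φ from rfl] at hx
    obtain ⟨k, hk⟩ := tsum_ne_zero_exists _ hx
    obtain ⟨i, hi, hi'⟩ := Finset.exists_ne_zero_of_sum_ne_zero hk
    obtain ⟨j, hj, hj'⟩ := Finset.exists_ne_zero_of_sum_ne_zero hi'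
    have h1 := ih (k, i.1, j.1) (left_ne_zero_of_mul hj')
    have h2 := hdeg (x.1 - k, i.2, j.2) (right_ne_zero_of_mul hj')
    rw [Finset.HasAntidiagonal.mem_antidiagonal] at hi hj
    have hmi : mdeg i.1 + mdeg i.2 = mdeg x.2.1 := by rw [← mdeg_add, hi]
    have hmj : mdeg j.1 + mdeg j.2 = mdeg x.2.2 := by rw [← mdeg_add, hj]
    simp only at h1 h2
    push_cast at h1 h2 ⊢
    omega

end Aux

/-- With respect to the formal inner product
`⟨f, g⟩ = ħ^{-n} ∫ f ḡ e^{(−|y|²+φ)/ħ}` with `φ ∈ 𝒲` of degree `≥ 3`, the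
normalized holomorphic monomials `y^I/√(I! ħ^{|I|})` are orthonormal modulo
`ħ`: `⟨y^I/√(I!ħ^{|I|}), y^J/√(J!ħ^{|J|})⟩ = δ_{IJ} + O(√ħ)`. -/
theorem normalized_monomials_orthonormal_mod_hbar (n : ℕ) (φ : WH n)
    (hdeg : ∀ x, φ x ≠ 0 → (3 : ℤ) ≤ x.1 + (mdeg x.2.1 : ℤ) + (mdeg x.2.2 : ℤ))
    (hinW : ∀ x, φ x ≠ 0 → ∃ m : ℕ, x.1 = 2 * (m : ℤ))
    (I J : MI n) :
    ipH φ (nmonH I) (nmonH J) 0 = (if I = J then 1 else 0) ∧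
    (∀ d : ℤ, d < 0 → ipH φ (nmonH I) (nmonH J) d = 0) := by
  have hh : hmul (nmonH I) (conjH (nmonH J))
      = hdelta (-(mdeg I : ℤ) + -(mdeg J : ℤ)) I J
          (((Real.sqrt (mfact I) : ℝ) : ℂ)⁻¹ * ((Real.sqrt (mfact J) : ℝ) : ℂ)⁻¹) := by
    rw [nmonH_eq, conjH_nmonH, hmul_hdelta, add_zero, zero_add]
  have key : ∀ d : ℤ, d ≤ 0 → ∀ q : ℕ × MI n,
      ((q.1.factorial : ℂ))⁻¹ * (mfact q.2 : ℂ) *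
        hmul (hpow φ q.1) (hmul (nmonH I) (conjH (nmonH J)))
          (d + 2 * (q.1 : ℤ) - 2 * (mdeg q.2 : ℤ), q.2, q.2) ≠ 0 →
      d = 0 ∧ I = J ∧ q = (0, I) := by
    intro d hd q hT
    rw [hh] at hT
    have hT' : hmul (hpow φ q.1)
        (hdelta (-(mdeg I : ℤ) + -(mdeg J : ℤ)) I J
          (((Real.sqrt (mfact I) : ℝ) : ℂ)⁻¹ * ((Real.sqrt (mfact J) : ℝ) : ℂ)⁻¹))
        (d + 2 * (q.1 : ℤ) - 2 * (mdeg q.2 : ℤ), q.2, q.2) ≠ 0 :=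
      fun h0 => hT (by rw [h0, mul_zero])
    obtain ⟨k, hk⟩ := tsum_ne_zero_exists _ hT'
    obtain ⟨i, hi, hi'⟩ := Finset.exists_ne_zero_of_sum_ne_zero hk
    obtain ⟨j, hj, hj'⟩ := Finset.exists_ne_zero_of_sum_ne_zero hi'
    have hF := left_ne_zero_of_mul hj'
    have hG := right_ne_zero_of_mul hj'
    have hGeq : ((d + 2 * (q.1 : ℤ) - 2 * (mdeg q.2 : ℤ)) - k, i.2, j.2)
        = (-(mdeg I : ℤ) + -(mdeg J : ℤ), I, J) := by
      by_contra hc; exact hG (if_neg hc)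
    simp only [Prod.mk.injEq] at hGeq
    obtain ⟨hk1, hi2, hj2⟩ := hGeq
    rw [Finset.HasAntidiagonal.mem_antidiagonal] at hi hj
    have hiq : i.1 + i.2 = q.2 := hi
    have hjq : j.1 + j.2 = q.2 := hj
    have hdeg3 := hpow_deg φ hdeg q.1 (k, i.1, j.1) hF
    simp only at hdeg3
    have hmi : mdeg i.1 + mdeg i.2 = mdeg q.2 := by rw [← mdeg_add, hiq]
    have hmj : mdeg j.1 + mdeg j.2 = mdeg q.2 := by rw [← mdeg_add, hjq]
    rw [hi2] at hmi
    rw [hj2] at hmj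
    have hm0 : q.1 = 0 ∧ d = 0 := by omega
    have hF0 : (k, i.1, j.1) = ((0 : ℤ), (0 : MI n), (0 : MI n)) := by
      rw [hm0.1, show hpow φ 0 = hone n from rfl] at hF
      by_contra hc; exact hF (if_neg hc)
    simp only [Prod.mk.injEq] at hF0
    obtain ⟨-, hi0, hj0⟩ := hF0
    have hMI : q.2 = I := by rw [← hiq, hi0, hi2, zero_add]
    have hMJ : q.2 = J := by rw [← hjq, hj0, hj2, zero_add]
    exact ⟨hm0.2, by rw [← hMI, hMJ], Prod.ext hm0.1 hMI⟩
  have main : ∀ d : ℤ, d ≤ 0 →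
      ipH φ (nmonH I) (nmonH J) d = if d = 0 ∧ I = J then 1 else 0 := by
    intro d hd
    have hsingle : ipH φ (nmonH I) (nmonH J) d
        = ((Nat.factorial 0 : ℂ))⁻¹ * (mfact I : ℂ) *
          hmul (hpow φ 0) (hmul (nmonH I) (conjH (nmonH J)))
            (d + 2 * ((0 : ℕ) : ℤ) - 2 * (mdeg I : ℤ), I, I) := by
      show FIH φ (hmul (nmonH I) (conjH (nmonH J))) d = _
      rw [FIH]
      exact tsum_eq_single ((0 : ℕ), I) (fun q hq => by
        by_contra hT
        exact hq (key d hd q hT).2.2)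
    rw [hsingle]
    by_cases hc : d = 0 ∧ I = J
    · obtain ⟨hd0, hIJ⟩ := hc
      subst hd0; subst hIJ
      rw [if_pos ⟨rfl, rfl⟩]
      rw [hh, show hpow φ 0 = hone n from rfl, hone_eq, hmul_hdelta]
      rw [show hdelta (0 + (-(mdeg I : ℤ) + -(mdeg I : ℤ))) (0 + I) (0 + I)
          (1 * (((Real.sqrt (mfact I) : ℝ) : ℂ)⁻¹ * ((Real.sqrt (mfact I) : ℝ) : ℂ)⁻¹))
          ((0 : ℤ) + 2 * ((0 : ℕ) : ℤ) - 2 * (mdeg I : ℤ), I, I)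
          = 1 * (((Real.sqrt (mfact I) : ℝ) : ℂ)⁻¹ * ((Real.sqrt (mfact I) : ℝ) : ℂ)⁻¹) from by
        rw [hdelta, if_pos (by simp [Prod.ext_iff]; ring)]]
      have hfi : (0 : ℝ) ≤ ((mfact I : ℕ) : ℝ) := by positivity
      rw [Nat.factorial_zero, Nat.cast_one, inv_one, one_mul, one_mul, ← mul_inv,
        ← Complex.ofReal_mul, Real.mul_self_sqrt hfi]
      rw [show (((mfact I : ℕ) : ℝ) : ℂ) = ((mfact I : ℕ) : ℂ) by push_cast; ring]
      exact mul_inv_cancel₀ (by exact_mod_cast (mfact_pos I).ne')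
    · rw [if_neg hc]
      by_contra hT
      exact hc ⟨(key d hd (0, I) hT).1, (key d hd (0, I) hT).2.1⟩
  refine ⟨?_, fun d hd => ?_⟩
  · rw [main 0 le_rfl]; simp
  · rw [main d hd.le]; simp [hd.ne]


end
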